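/- arXiv:math/9809204 — 6 statements merged into one kernel-verified Lean document; each statement's English description precedes it below -/
import Mathlib

section
/- In the processor sharing model, for a facet index I with I ≠ {1,…,N}, the perturbation vector Σ_v c_v (r_{I,v} − r_{∅,v}) v equals Σ_{i∈I} (f_i/f_{I^c}) CΛ(e_i − f), where f_{I^c} = Σ_{j∉I} f_j. In particular it is a nonnegative linear combination of the vectors d_i = CΛ(e_i − f)/‖CΛ(e_i − f)‖, i ∈ I. -/
/-!
Coordinatewise, both sides of the identity equal `c_j⁻ σ_j (f_j - 1{j ∉ I} f_j / f_{Iᶜ})`, because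
`∑_{i ∈ I} f_i = 1 - f_{Iᶜ}`. Writing `w_i = CΛ(e_i - f)`, the coefficients
`α_i = (f_i / f_{Iᶜ}) ‖w_i‖` then express the perturbation vector in the directions `‖w_i‖⁻¹ w_i`.
-/

open Finset

theorem Finset.sum_div_sum_compl_mul_ite_sub {ι : Type*} [Fintype ι] [DecidableEq ι]
    (f : ι → ℝ) (hf : ∑ i, f i = 1) (s : Finset ι) (hs : ∑ i ∈ sᶜ, f i ≠ 0) (j : ι) :
    ∑ i ∈ s, f i / (∑ k ∈ sᶜ, f k) * ((if j = i then 1 else 0) - f j)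
      = f j - if j ∈ s then 0 else f j / ∑ k ∈ sᶜ, f k := by
  have hsum : ∑ i ∈ s, f i = 1 - ∑ k ∈ sᶜ, f k := by
    rw [← hf, ← sum_add_sum_compl s f]; ring
  simp only [mul_sub, mul_ite, mul_one, mul_zero, sum_sub_distrib, sum_ite_eq, ← sum_mul,
    ← sum_div, hsum]
  split_ifs <;> field_simp <;> ring

theorem Finset.exists_nonneg_sum_smul_inv_norm_smul {ι E : Type*} [NormedAddCommGroup E]
    [NormedSpace ℝ E] (s : Finset ι) (c : ι → ℝ) (hc : ∀ i, 0 ≤ c i) (w : ι → E) :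
    ∃ α : ι → ℝ, (∀ i, 0 ≤ α i) ∧ ∑ i ∈ s, c i • w i = ∑ i ∈ s, α i • (‖w i‖⁻¹ • w i) := by
  refine ⟨fun i => c i * ‖w i‖, fun i => mul_nonneg (hc i) (norm_nonneg _), ?_⟩
  refine sum_congr rfl fun i _ => ?_
  rcases eq_or_ne (w i) 0 with hw | hw
  · simp [hw]
  · rw [smul_smul, mul_assoc, mul_inv_cancel₀ (norm_ne_zero_iff.mpr hw), mul_one]

theorem processor_sharing_perturbation_eq {ι : Type*} [Fintype ι] [DecidableEq ι]
    (f σ cm : ι → ℝ) (hf : ∑ i, f i = 1) (s : Finset ι) (hs : ∑ i ∈ sᶜ, f i ≠ 0) :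
    ∑ i, (cm i * ((if i ∈ s then 0 else σ i * f i / ∑ k ∈ sᶜ, f k) - σ i * f i)) •
        (-EuclideanSpace.single i 1 : EuclideanSpace ℝ ι)
      = ∑ i ∈ s, (f i / ∑ k ∈ sᶜ, f k) •
          WithLp.toLp 2 (fun j => cm j * σ j * ((if j = i then (1 : ℝ) else 0) - f j)) := by
  ext j
  calc _ = cm j * σ j * (f j - if j ∈ s then 0 else f j / ∑ k ∈ sᶜ, f k) := by
        simp only [smul_neg, sum_neg_distrib, PiLp.neg_apply, WithLp.ofLp_sum, WithLp.ofLp_smul,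
          PiLp.ofLp_single, Finset.sum_apply, Pi.smul_apply, Pi.single_apply, smul_eq_mul,
          mul_ite, mul_one, mul_zero, sum_ite_eq, mem_univ, ↓reduceIte]
        split_ifs <;> ring
    _ = _ := by
        rw [← sum_div_sum_compl_mul_ite_sub f hf s hs j, mul_sum]
        simp only [WithLp.ofLp_sum, Finset.sum_apply, PiLp.smul_apply]
        exact sum_congr rfl fun i _ => by ring

theorem processor_sharing_perturbation_general {N : ℕ}
    (a f σ cp cm : Fin N → ℝ)
    (hf : ∀ i, 0 < f i) (hfs : ∑ i, f i = 1)
    (I : Finset (Fin N)) (hI : I ≠ Finset.univ) :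
    letI e : Fin N → EuclideanSpace ℝ (Fin N) := fun i => EuclideanSpace.single i 1
    letI fIc : ℝ := ∑ j ∈ Iᶜ, f j
    letI CL : Fin N → EuclideanSpace ℝ (Fin N) :=
      fun i => WithLp.toLp 2 (fun j => cm j * σ j * ((if j = i then (1:ℝ) else 0) - f j) : Fin N → ℝ)
    ((∑ i, (cp i * (a i - a i)) • e i)
      + ∑ i, (cm i * ((if i ∈ I then 0 else σ i * f i / fIc) - σ i * f i)) • (-(e i))
      = ∑ i ∈ I, (f i / fIc) • CL i) ∧
    ∃ α : Fin N → ℝ, (∀ i, 0 ≤ α i) ∧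
      (∑ i, (cp i * (a i - a i)) • e i)
        + ∑ i, (cm i * ((if i ∈ I then 0 else σ i * f i / fIc) - σ i * f i)) • (-(e i))
        = ∑ i ∈ I, α i • (‖CL i‖⁻¹ • CL i) := by
  have hfIc : 0 < ∑ j ∈ Iᶜ, f j :=
    sum_pos (fun j _ => hf j) (by rwa [← compl_ne_univ_iff_nonempty, compl_compl])
  have key := processor_sharing_perturbation_eq f σ cm hfs I hfIc.ne'
  simp only [sub_self, mul_zero, zero_smul, sum_const_zero, zero_add]
  exact ⟨key, key ▸ exists_nonneg_sum_smul_inv_norm_smul I _ (fun i => div_nonneg (hf i).le hfIc.le) _⟩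

/-- in the processor sharing model, for a facet index
I ≠ {1,…,N}, the perturbation vector Σ_v c_v (r_{I,v} − r_{∅,v}) v equals
Σ_{i∈I} (f_i/f_{I^c}) CΛ(e_i − f); in particular it is a nonnegative linear
combination of the normalized directions d_i = CΛ(e_i − f)/‖CΛ(e_i − f)‖,
i ∈ I.  Here V = {±e_i}, r_{I,e_i} = a_i, r_{I,−e_i} = σ_i f_i/f_{I^c}·1{i∉I},
C = diag(c_i^−), Λ = diag(σ_i). -/
theorem processor_sharing_perturbation {N : ℕ}
    (a f σ cp cm : Fin N → ℝ)
    (ha : ∀ i, 0 < a i) (hf : ∀ i, 0 < f i) (hfs : ∑ i, f i = 1)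
    (hσ : ∀ i, 0 < σ i) (hcp : ∀ i, 0 < cp i) (hcm : ∀ i, 0 < cm i)
    (I : Finset (Fin N)) (hI : I ≠ Finset.univ) :
    letI e : Fin N → EuclideanSpace ℝ (Fin N) := fun i => EuclideanSpace.single i 1
    letI fIc : ℝ := ∑ j ∈ Iᶜ, f j
    letI CL : Fin N → EuclideanSpace ℝ (Fin N) :=
      fun i => WithLp.toLp 2 (fun j => cm j * σ j * ((if j = i then (1:ℝ) else 0) - f j) : Fin N → ℝ)
    ((∑ i, (cp i * (a i - a i)) • e i)
      + ∑ i, (cm i * ((if i ∈ I then 0 else σ i * f i / fIc) - σ i * f i)) • (-(e i))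
      = ∑ i ∈ I, (f i / fIc) • CL i) ∧
    ∃ α : Fin N → ℝ, (∀ i, 0 ≤ α i) ∧
      (∑ i, (cp i * (a i - a i)) • e i)
        + ∑ i, (cm i * ((if i ∈ I then 0 else σ i * f i / fIc) - σ i * f i)) • (-(e i))
        = ∑ i ∈ I, α i • (‖CL i‖⁻¹ • CL i) :=
  processor_sharing_perturbation_general a f σ cp cm hf hfs I hI
end

section
/- Let σ_i > 0 and let P = [p_{i,j}]_{i,j=1}^N be a substochastic matrix (p_{i,j} ≥ 0, Σ_{j=0}^N p_{i,j} = 1 with p_{i,0} ≥ 0) that is irreducible and has p_{i,0} > 0 for at least one i, and let c_i^− > 0, c_{i,j} > 0. Define d_i = −Σ_{j≠i} c_{i,j} σ_i p_{i,j} (e_j − e_i) + c_i^− σ_i p_{i,0} e_i. Then the vectors d_1, …, d_N are linearly independent. -/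
/-!
Write `d_i = e_i u_i + Σ_{j ≠ i} w_{ij} (u_i - u_j)` for unit vectors `u_i`, exit rates
`e_i = c_i^− σ_i p_{i,0} ≥ 0` and weights `w_{ij} = c_{ij} σ_i p_{ij} ≥ 0`, and let
`γ_i = e_i + Σ_{j ≠ i} w_{ij}`. If `Σ g_i d_i = 0`, then `g_k γ_k = Σ_{i ≠ k} w_{ik} g_i` for every
`k`. Taking absolute values and summing over `k`, the double sum on the right is
`Σ_i |g_i| (γ_i - e_i)`, so every triangle inequality is tight and `|g_i| e_i = 0` for all `i`.
Thus `g` vanishes at every exit, and `g_k = 0` forces `g_i = 0` whenever `w_{ik} > 0`; since every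
state reaches an exit, `g = 0`.
-/

open Finset

section KilledLaplacian

variable {ι : Type*} [Fintype ι] [DecidableEq ι]

/-- The rows of `diag e + L`, where `L` is the Laplacian of the weighted digraph `w`. -/
def killedLaplacian (e : ι → ℝ) (w : ι → ι → ℝ) (i k : ι) : ℝ :=
  if k = i then e i + ∑ j ∈ univ.erase i, w i j else -w i k

theorem sum_sum_erase_comm {M : Type*} [AddCommGroup M] (f : ι → ι → M) :
    ∑ k, ∑ i ∈ univ.erase k, f i k = ∑ i, ∑ k ∈ univ.erase i, f i k := by
  simp_rw [sum_erase_eq_sub (mem_univ _), sum_sub_distrib]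
  rw [sum_comm]

variable (e : ι → ℝ) (w : ι → ι → ℝ) (g : ι → ℝ)

theorem sum_smul_killedLaplacian_apply (k : ι) :
    (∑ i, g i • killedLaplacian e w i) k =
      g k * (e k + ∑ j ∈ univ.erase k, w k j) - ∑ i ∈ univ.erase k, w i k * g i := by
  simp only [Finset.sum_apply, Pi.smul_apply, smul_eq_mul, killedLaplacian]
  rw [← add_sum_erase _ _ (mem_univ k), if_pos rfl, sub_eq_add_neg, ← sum_neg_distrib]
  congr 1
  refine sum_congr rfl fun i hi => ?_
  rw [if_neg (ne_of_mem_erase hi).symm]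
  ring

theorem sum_inflow_eq :
    ∑ k, ∑ i ∈ univ.erase k, w i k * |g i| =
      ∑ i, |g i| * (e i + ∑ j ∈ univ.erase i, w i j) - ∑ i, |g i| * e i := by
  rw [sum_sum_erase_comm, ← sum_sub_distrib]
  refine sum_congr rfl fun i _ => ?_
  rw [mul_add, add_sub_cancel_left, mul_sum]
  exact sum_congr rfl fun j _ => mul_comm _ _

variable {e w g} (he : ∀ i, 0 ≤ e i) (hw : ∀ i j, 0 ≤ w i j)
  (hg : ∑ i, g i • killedLaplacian e w i = 0)
include he hw hg

theorem abs_mul_diag_le_inflow (k : ι) :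
    |g k| * (e k + ∑ j ∈ univ.erase k, w k j) ≤ ∑ i ∈ univ.erase k, w i k * |g i| := by
  have hdiag : 0 ≤ e k + ∑ j ∈ univ.erase k, w k j :=
    add_nonneg (he k) (sum_nonneg fun j _ => hw k j)
  have hk := congrFun hg k
  rw [sum_smul_killedLaplacian_apply, Pi.zero_apply, sub_eq_zero] at hk
  calc |g k| * (e k + ∑ j ∈ univ.erase k, w k j)
      = |∑ i ∈ univ.erase k, w i k * g i| := by rw [← hk, abs_mul, abs_of_nonneg hdiag]
    _ ≤ ∑ i ∈ univ.erase k, |w i k * g i| := abs_sum_le_sum_abs _ _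
    _ = ∑ i ∈ univ.erase k, w i k * |g i| := by simp only [abs_mul, abs_of_nonneg (hw _ k)]

theorem abs_mul_diag_eq_inflow_and_exit_eq_zero :
    (∀ k, |g k| * (e k + ∑ j ∈ univ.erase k, w k j) = ∑ i ∈ univ.erase k, w i k * |g i|) ∧
      ∀ i, |g i| * e i = 0 := by
  have hle := abs_mul_diag_le_inflow he hw hg
  have hexit_nonneg : ∀ i ∈ univ, 0 ≤ |g i| * e i := fun i _ => mul_nonneg (abs_nonneg _) (he i)
  have hexit_sum : ∑ i, |g i| * e i = 0 := by
    have := sum_le_sum fun k (_ : k ∈ univ) => hle k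
    rw [sum_inflow_eq] at this
    exact le_antisymm (by linarith) (sum_nonneg hexit_nonneg)
  refine ⟨fun k => ?_, fun i => (sum_eq_zero_iff_of_nonneg hexit_nonneg).1 hexit_sum i (mem_univ i)⟩
  refine (sum_eq_sum_iff_of_le fun k _ => hle k).1 ?_ k (mem_univ k)
  rw [sum_inflow_eq, hexit_sum, sub_zero]

theorem eq_zero_of_exit_pos {i : ι} (hi : 0 < e i) : g i = 0 := by
  have := (abs_mul_diag_eq_inflow_and_exit_eq_zero he hw hg).2 i
  exact abs_eq_zero.1 ((mul_eq_zero.1 this).resolve_right hi.ne')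

theorem eq_zero_of_weight_pos {i k : ι} (hik : 0 < w i k) (hk : g k = 0) : g i = 0 := by
  obtain rfl | hne := eq_or_ne i k
  · exact hk
  have hinflow := (abs_mul_diag_eq_inflow_and_exit_eq_zero he hw hg).1 k
  rw [hk, abs_zero, zero_mul, eq_comm,
    sum_eq_zero_iff_of_nonneg fun j _ => mul_nonneg (hw j k) (abs_nonneg _)] at hinflow
  exact abs_eq_zero.1 ((mul_eq_zero.1 (hinflow i (mem_erase.2 ⟨hne, mem_univ i⟩))).resolve_left
    hik.ne')

omit hg

theorem killedLaplacian_linearIndependent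
    (hreach : ∀ i, ∃ j, Relation.ReflTransGen (fun i j => 0 < w i j) i j ∧ 0 < e j) :
    LinearIndependent ℝ (killedLaplacian e w) := by
  rw [Fintype.linearIndependent_iff]
  intro g hg i
  obtain ⟨j, hij, hj⟩ := hreach i
  induction hij using Relation.ReflTransGen.head_induction_on with
  | refl => exact eq_zero_of_exit_pos he hw hg hj
  | head hik _ ih => exact eq_zero_of_weight_pos he hw hg hik ih

end KilledLaplacian

theorem jackson_directions_linearIndependent_general {N : ℕ}
    (σ cm : Fin N → ℝ) (c p : Fin N → Fin N → ℝ) (p0 : Fin N → ℝ)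
    (hσ : ∀ i, 0 < σ i) (hcm : ∀ i, 0 < cm i) (hc : ∀ i j, 0 < c i j)
    (hp : ∀ i j, 0 ≤ p i j) (hp0 : ∀ i, 0 ≤ p0 i)
    (hirr : ∀ i j : Fin N, Relation.TransGen (fun i j => 0 < p i j) i j)
    (hexit : ∃ i, 0 < p0 i) :
    LinearIndependent ℝ (fun i : Fin N =>
      (fun k => if k = i
          then cm i * σ i * p0 i + ∑ j ∈ Finset.univ.erase i, c i j * σ i * p i j
          else -(c i k * σ i * p i k) : Fin N → ℝ)) := by
  obtain ⟨i₀, hi₀⟩ := hexit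
  have hweight : ∀ i j, 0 < p i j → 0 < c i j * σ i * p i j := fun i j hij =>
    mul_pos (mul_pos (hc i j) (hσ i)) hij
  refine killedLaplacian_linearIndependent
    (fun i => mul_nonneg (mul_pos (hcm i) (hσ i)).le (hp0 i))
    (fun i j => mul_nonneg (mul_pos (hc i j) (hσ i)).le (hp i j))
    fun i => ⟨i₀, (Relation.TransGen.mono hweight _ _ (hirr i i₀)).to_reflTransGen, ?_⟩
  exact mul_pos (mul_pos (hcm i₀) (hσ i₀)) hi₀

/-- linear independence of the Jackson network constraint
directions d_i = −Σ_{j≠i} c_{i,j} σ_i p_{i,j}(e_j − e_i) + c_i^− σ_i p_{i,0} e_i,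
for an irreducible substochastic routing matrix with p_{i,0} > 0 for some i and
positive multipliers. -/
theorem jackson_directions_linearIndependent {N : ℕ}
    (σ cm : Fin N → ℝ) (c p : Fin N → Fin N → ℝ) (p0 : Fin N → ℝ)
    (hσ : ∀ i, 0 < σ i) (hcm : ∀ i, 0 < cm i) (hc : ∀ i j, 0 < c i j)
    (hp : ∀ i j, 0 ≤ p i j) (hp0 : ∀ i, 0 ≤ p0 i)
    (hrow : ∀ i, p0 i + ∑ j, p i j = 1)
    (hirr : ∀ i j : Fin N, Relation.TransGen (fun i j => 0 < p i j) i j)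
    (hexit : ∃ i, 0 < p0 i) :
    LinearIndependent ℝ (fun i : Fin N =>
      (fun k => if k = i
          then cm i * σ i * p0 i + ∑ j ∈ Finset.univ.erase i, c i j * σ i * p i j
          else -(c i k * σ i * p i k) : Fin N → ℝ)) :=
  jackson_directions_linearIndependent_general σ cm c p p0 hσ hcm hc hp hp0 hirr hexit
end

section
/- For the Jackson network, if the quadruple (ρ, r̄, c, β) satisfies system (8), then with τ_i := Σ_{I : i ∉ I} ρ_I and D the matrix with columns d_i (as in the network's constraint directions), one has D τ = −β + Σ_i c_i^+ a_i e_i. Since D is invertible, τ (and hence r̄_v = τ_i r_{∅,v} for v = −e_i or v = e_{i,j}, and r̄_{e_i} = a_i) is uniquely and continuously determined by β and the c's. -/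
open Finset

/-! The coefficient matrix `D` is the transpose of `L = diag(d) + Δ_w`, where `Δ_w` is the weighted
Laplacian of the routing graph `w i j = c i j σ i p i j` and `d i = c⁻ᵢ σᵢ p_{i,0}` is the exit rate.
Summing system (8) over the states `I` turns it into `τ ᵥ* L = -β + c⁺ a`. A vector `x` with
`L x = 0` obeys a discrete maximum principle: at a positive maximum every term of `(L x)_i` is
nonnegative, hence zero, so the maximum spreads along the irreducible routing graph until it reaches
a station with positive exit rate, where `d i x_i > 0`. Hence `L` is invertible and `τ` is unique. -/

namespace Matrix

variable {ι : Type*} [Fintype ι] [DecidableEq ι]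

def killedLaplacian (d : ι → ℝ) (w : ι → ι → ℝ) : Matrix ι ι ℝ :=
  diagonal (fun i => d i + ∑ j, w i j) - of w

variable {d : ι → ℝ} {w : ι → ι → ℝ}

theorem killedLaplacian_apply (i k : ι) :
    killedLaplacian d w i k =
      if k = i then d i + ∑ j ∈ univ.erase i, w i j else -w i k := by
  by_cases hki : k = i
  · subst hki
    rw [killedLaplacian, sub_apply, diagonal_apply_eq, of_apply, if_pos rfl,
      ← add_sum_erase univ (w k) (mem_univ k)]
    ring
  · simp [killedLaplacian, diagonal_apply_ne _ (Ne.symm hki), hki]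

theorem killedLaplacian_mulVec_apply (x : ι → ℝ) (i : ι) :
    (killedLaplacian d w *ᵥ x) i = d i * x i + ∑ j, w i j * (x i - x j) := by
  rw [killedLaplacian, sub_mulVec, Pi.sub_apply, mulVec_diagonal]
  simp only [mulVec, dotProduct, of_apply, mul_sub, sum_sub_distrib, ← sum_mul]
  ring

theorem killedLaplacian_eq_zero_at_max (hd : ∀ i, 0 ≤ d i) (hw : ∀ i j, 0 ≤ w i j)
    {x : ι → ℝ} (hx : killedLaplacian d w *ᵥ x = 0) {m : ι} (hmax : ∀ k, x k ≤ x m)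
    (hpos : 0 ≤ x m) : d m * x m = 0 ∧ ∀ j, w m j * (x m - x j) = 0 := by
  have hm := congrFun hx m
  rw [killedLaplacian_mulVec_apply, Pi.zero_apply] at hm
  have hterms : ∀ j ∈ univ, 0 ≤ w m j * (x m - x j) :=
    fun j _ => mul_nonneg (hw m j) (sub_nonneg.mpr (hmax j))
  obtain ⟨hdm, hsum⟩ :=
    (add_eq_zero_iff_of_nonneg (mul_nonneg (hd m) hpos) (sum_nonneg hterms)).mp hm
  exact ⟨hdm, fun j => (sum_eq_zero_iff_of_nonneg hterms).mp hsum j (mem_univ j)⟩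

theorem nonpos_of_killedLaplacian_mulVec_eq_zero (hd : ∀ i, 0 ≤ d i) (hw : ∀ i j, 0 ≤ w i j)
    (hreach : ∀ i, ∃ j, 0 < d j ∧ Relation.ReflTransGen (fun a b => 0 < w a b) i j)
    {x : ι → ℝ} (hx : killedLaplacian d w *ᵥ x = 0) (i : ι) : x i ≤ 0 := by
  by_contra! hi
  have : Nonempty ι := ⟨i⟩
  obtain ⟨m, hmax⟩ := Finite.exists_max x
  have hpos : 0 < x m := hi.trans_le (hmax i)
  have hspread : ∀ j, Relation.ReflTransGen (fun a b => 0 < w a b) m j → x j = x m := by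
    intro j hj
    induction hj with
    | refl => rfl
    | @tail b c _ hbc ih =>
      have hstep := (killedLaplacian_eq_zero_at_max hd hw hx (ih ▸ hmax) (ih ▸ hpos.le)).2 c
      rw [← ih]
      linarith [(mul_eq_zero.mp hstep).resolve_left hbc.ne']
  obtain ⟨e, hde, hme⟩ := hreach m
  have hxe := hspread e hme
  have hzero := (killedLaplacian_eq_zero_at_max hd hw hx (hxe ▸ hmax) (hxe ▸ hpos.le)).1
  rw [hxe] at hzero
  exact (mul_pos hde hpos).ne' hzero

theorem isUnit_killedLaplacian (hd : ∀ i, 0 ≤ d i) (hw : ∀ i j, 0 ≤ w i j)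
    (hreach : ∀ i, ∃ j, 0 < d j ∧ Relation.ReflTransGen (fun a b => 0 < w a b) i j) :
    IsUnit (killedLaplacian d w) := by
  rw [← mulVec_injective_iff_isUnit]
  intro x y hxy
  have hx : killedLaplacian d w *ᵥ (x - y) = 0 := by rw [mulVec_sub, hxy, sub_self]
  have hx' : killedLaplacian d w *ᵥ (-(x - y)) = 0 := by rw [mulVec_neg, hx, neg_zero]
  funext i
  have h₁ := nonpos_of_killedLaplacian_mulVec_eq_zero hd hw hreach hx i
  have h₂ := nonpos_of_killedLaplacian_mulVec_eq_zero hd hw hreach hx' i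
  simp only [Pi.neg_apply, Pi.sub_apply] at h₁ h₂
  linarith

end Matrix

section Flux

variable {ι : Type*} [Fintype ι] [DecidableEq ι]

theorem sum_mul_sum_sdiff_eq_sum_filter_not_mem (S : Finset (Finset ι)) (ρ : Finset ι → ℝ)
    (f : ι → ℝ) :
    ∑ I ∈ S, ρ I * ∑ i ∈ univ \ I, f i = ∑ i, (∑ I ∈ S.filter (fun I => i ∉ I), ρ I) * f i := by
  simp only [Finset.mul_sum, Finset.sum_mul, sdiff_eq_filter, sum_filter, mul_ite, ite_mul,
    mul_zero, zero_mul]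
  exact Finset.sum_comm


theorem sum_erase_mul_indicator_sub (w : ι → ι → ℝ) (i k : ι) :
    ∑ j ∈ univ.erase i, w i j * ((if k = j then (1:ℝ) else 0) - (if k = i then (1:ℝ) else 0))
      = if k = i then -∑ j ∈ univ.erase i, w i j else w i k := by
  by_cases hki : k = i
  · subst hki
    simp only [← Finset.sum_neg_distrib]
    refine Finset.sum_congr rfl fun j hj => ?_
    simp [Ne.symm (ne_of_mem_erase hj)]
  · simp [hki, Finset.sum_ite_eq]

theorem sum_mul_killedLaplacian_entry_eq_flux (S : Finset (Finset ι)) (ρ : Finset ι → ℝ)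
    (d : ι → ℝ) (w : ι → ι → ℝ) (k : ι) :
    ∑ i, (∑ I ∈ S.filter (fun I => i ∉ I), ρ I) *
        (if k = i then d i + ∑ j ∈ univ.erase i, w i j else -w i k)
      = (∑ I ∈ S, if k ∈ I then 0 else ρ I * d k)
        - ∑ I ∈ S, ρ I * ∑ i ∈ univ \ I, ∑ j ∈ univ.erase i,
            w i j * ((if k = j then (1:ℝ) else 0) - (if k = i then (1:ℝ) else 0)) := by
  have hexit : (∑ I ∈ S, if k ∈ I then 0 else ρ I * d k)
      = (∑ I ∈ S.filter (fun I => k ∉ I), ρ I) * d k := by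
    rw [sum_mul, sum_filter]
    exact Finset.sum_congr rfl fun I _ => by split_ifs <;> simp
  have hsplit : ∀ i, (if k = i then d i + ∑ j ∈ univ.erase i, w i j else -w i k)
      = (if k = i then d i else 0) - (if k = i then -∑ j ∈ univ.erase i, w i j else w i k) :=
    fun i => by split_ifs <;> ring
  rw [hexit, sum_mul_sum_sdiff_eq_sum_filter_not_mem]
  simp only [sum_erase_mul_indicator_sub]
  simp only [hsplit, mul_sub, sum_sub_distrib, mul_ite, mul_zero,
    sum_ite_eq, mem_univ, if_true]

end Flux

theorem jackson_tau_equation_and_unique_general {N : ℕ}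
    (K : Finset (Fin N))
    (a σ cp cm : Fin N → ℝ) (c p : Fin N → Fin N → ℝ) (p0 : Fin N → ℝ)
    (hσ : ∀ i, 0 < σ i) (hcm : ∀ i, 0 < cm i)
    (hc : ∀ i j, 0 < c i j)
    (hp : ∀ i j, 0 ≤ p i j) (hp0 : ∀ i, 0 ≤ p0 i)
    (hirr : ∀ i j : Fin N, Relation.TransGen (fun i j => 0 < p i j) i j)
    (hexit : ∃ i, 0 < p0 i)
    (ρ : Finset (Fin N) → ℝ) (β : Fin N → ℝ)
    -- β = Σ_{I,v} ρ_I c_v r_{I,v} v, componentwise: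
    (hβ : ∀ k, β k = cp k * a k
        - (∑ I ∈ K.powerset, if k ∈ I then 0 else ρ I * (cm k * σ k * p0 k))
        + ∑ I ∈ K.powerset, ρ I *
            ∑ i ∈ Finset.univ \ I, ∑ j ∈ Finset.univ.erase i,
              c i j * σ i * p i j *
                ((if k = j then (1:ℝ) else 0) - (if k = i then (1:ℝ) else 0))) :
    -- conclusion 1: D τ = −β + Σ_i c_i^+ a_i e_i, componentwise
    (∀ k, (∑ i, (∑ I ∈ K.powerset.filter (fun I => i ∉ I), ρ I) *
        (if k = i
          then cm i * σ i * p0 i + ∑ j ∈ Finset.univ.erase i, c i j * σ i * p i j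
          else -(c i k * σ i * p i k)))
      = -β k + cp k * a k) ∧
    -- conclusion 2: τ is uniquely determined by β (and the c's)
    (∀ ρ' : Finset (Fin N) → ℝ,
      (∀ I ∈ K.powerset, 0 ≤ ρ' I) → (∑ I ∈ K.powerset, ρ' I = 1) →
      (∀ k, β k = cp k * a k
        - (∑ I ∈ K.powerset, if k ∈ I then 0 else ρ' I * (cm k * σ k * p0 k))
        + ∑ I ∈ K.powerset, ρ' I *
            ∑ i ∈ Finset.univ \ I, ∑ j ∈ Finset.univ.erase i,
              c i j * σ i * p i j *
                ((if k = j then (1:ℝ) else 0) - (if k = i then (1:ℝ) else 0))) →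
      ∀ i, (∑ I ∈ K.powerset.filter (fun I => i ∉ I), ρ' I)
        = ∑ I ∈ K.powerset.filter (fun I => i ∉ I), ρ I) := by
  set d : Fin N → ℝ := fun i => cm i * σ i * p0 i
  set w : Fin N → Fin N → ℝ := fun i j => c i j * σ i * p i j
  set L := Matrix.killedLaplacian d w
  have hequation : ∀ ρ₀ : Finset (Fin N) → ℝ, (∀ k, β k = cp k * a k
      - (∑ I ∈ K.powerset, if k ∈ I then 0 else ρ₀ I * d k)
      + ∑ I ∈ K.powerset, ρ₀ I * ∑ i ∈ univ \ I, ∑ j ∈ univ.erase i,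
          w i j * ((if k = j then (1:ℝ) else 0) - (if k = i then (1:ℝ) else 0))) →
      ∀ k, ∑ i, (∑ I ∈ K.powerset.filter (fun I => i ∉ I), ρ₀ I) * L i k
        = -β k + cp k * a k := by
    intro ρ₀ hβ₀ k
    simp only [L, Matrix.killedLaplacian_apply]
    rw [sum_mul_killedLaplacian_entry_eq_flux, hβ₀ k]
    ring
  have hunit : IsUnit L :=
    Matrix.isUnit_killedLaplacian
      (fun i => mul_nonneg (mul_pos (hcm i) (hσ i)).le (hp0 i))
      (fun i j => mul_nonneg (mul_pos (hc i j) (hσ i)).le (hp i j))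
      fun i => hexit.imp fun e he => ⟨mul_pos (mul_pos (hcm e) (hσ e)) he,
        (Relation.TransGen.mono (fun a b hab => mul_pos (mul_pos (hc a b) (hσ a)) hab)
          _ _ (hirr i e)).to_reflTransGen⟩
  refine ⟨fun k => by simpa [L, Matrix.killedLaplacian_apply] using hequation ρ hβ k,
    fun ρ' _ _ hβ' => congrFun ?_⟩
  exact Matrix.vecMul_injective_iff_isUnit.mpr hunit
    (funext fun k => (hequation ρ' hβ' k).trans (hequation ρ hβ k).symm)

/-- for the Jackson network, if (ρ, r̄, c, β) satisfies system
(8) (expressed componentwise via the model's rates), then with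
τ_i := Σ_{I : i∉I} ρ_I and D the matrix with columns
d_i = −Σ_{j≠i} c_{i,j} σ_i p_{i,j}(e_j − e_i) + c_i^− σ_i p_{i,0} e_i,
one has D τ = −β + Σ_i c_i^+ a_i e_i; and since D is invertible (given the
positivity/irreducibility hypotheses), τ is uniquely determined by β and the
c's: any other admissible ρ' yielding the same β gives the same τ. -/
theorem jackson_tau_equation_and_unique {N : ℕ}
    (K : Finset (Fin N))
    (a σ cp cm : Fin N → ℝ) (c p : Fin N → Fin N → ℝ) (p0 : Fin N → ℝ)
    (hσ : ∀ i, 0 < σ i) (hcm : ∀ i, 0 < cm i) (hcp : ∀ i, 0 ≤ cp i)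
    (hc : ∀ i j, 0 < c i j) (ha : ∀ i, 0 ≤ a i)
    (hp : ∀ i j, 0 ≤ p i j) (hp0 : ∀ i, 0 ≤ p0 i)
    (hrow : ∀ i, p0 i + ∑ j, p i j = 1)
    (hirr : ∀ i j : Fin N, Relation.TransGen (fun i j => 0 < p i j) i j)
    (hexit : ∃ i, 0 < p0 i)
    (ρ : Finset (Fin N) → ℝ) (β : Fin N → ℝ)
    (hρ : ∀ I ∈ K.powerset, 0 ≤ ρ I) (hρ1 : ∑ I ∈ K.powerset, ρ I = 1)
    -- β = Σ_{I,v} ρ_I c_v r_{I,v} v, componentwise: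
    (hβ : ∀ k, β k = cp k * a k
        - (∑ I ∈ K.powerset, if k ∈ I then 0 else ρ I * (cm k * σ k * p0 k))
        + ∑ I ∈ K.powerset, ρ I *
            ∑ i ∈ Finset.univ \ I, ∑ j ∈ Finset.univ.erase i,
              c i j * σ i * p i j *
                ((if k = j then (1:ℝ) else 0) - (if k = i then (1:ℝ) else 0))) :
    -- conclusion 1: D τ = −β + Σ_i c_i^+ a_i e_i, componentwise
    (∀ k, (∑ i, (∑ I ∈ K.powerset.filter (fun I => i ∉ I), ρ I) *
        (if k = i
          then cm i * σ i * p0 i + ∑ j ∈ Finset.univ.erase i, c i j * σ i * p i j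
          else -(c i k * σ i * p i k)))
      = -β k + cp k * a k) ∧
    -- conclusion 2: τ is uniquely determined by β (and the c's)
    (∀ ρ' : Finset (Fin N) → ℝ,
      (∀ I ∈ K.powerset, 0 ≤ ρ' I) → (∑ I ∈ K.powerset, ρ' I = 1) →
      (∀ k, β k = cp k * a k
        - (∑ I ∈ K.powerset, if k ∈ I then 0 else ρ' I * (cm k * σ k * p0 k))
        + ∑ I ∈ K.powerset, ρ' I *
            ∑ i ∈ Finset.univ \ I, ∑ j ∈ Finset.univ.erase i,
              c i j * σ i * p i j *
                ((if k = j then (1:ℝ) else 0) - (if k = i then (1:ℝ) else 0))) →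
      ∀ i, (∑ I ∈ K.powerset.filter (fun I => i ∉ I), ρ' I)
        = ∑ I ∈ K.powerset.filter (fun I => i ∉ I), ρ I) :=
  jackson_tau_equation_and_unique_general K a σ cp cm c p p0 hσ hcm hc hp hp0 hirr hexit ρ β hβ
end

section
/- Let Γ be a regular Skorokhod Map for G = ∩_{i=1}^q {x : ⟨x, n_i⟩ ≥ 0} with Lipschitz constant K_1, let x ∈ ∂G, x ≠ 0, and I(x) = {i : ⟨n_i, x⟩ = 0}. Then the Skorokhod Map for G̃ = ∩_{i ∈ I(x)} {y : ⟨y, n_i⟩ ≥ 0} with direction data {(n_i, d_i), i ∈ I(x)} exists on bounded-variation paths and is Lipschitz continuous with the same constant K_1. -/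
/-!
Translate by a large multiple of `x`. Since `⟪x, n i⟫ = 0` for `i ∈ I(x)`, the domain `G̃` and
its direction cones are invariant under `y ↦ y + a • x`; since `⟪x, n i⟫ > 0` for `i ∉ I(x)`,
a bounded path translated by `a • x` with `a` large stays in the open region where the
constraints outside `I(x)` are slack, and there `G` and `G̃` and their cones agree, so the two
Skorokhod problems have the same solutions along such a path.

Solutions on `G̃` are bounded (input and regulator have bounded variation), so two of them
translate to solutions on `G` and inherit the Lipschitz bound. For existence, solve on `G` for
the translated input: comparing with the constant solution at `ψ 0 + a • x`, the Lipschitz bound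
keeps the output within `K1 · sup ‖ψ t - ψ 0‖` of that point, hence in the slack region, and the
solution translates back.
-/

open MeasureTheory Set

noncomputable section

/-- The cone d(x) of directions of constraint, restricted to an index set
s: normalized nonnegative combinations of the d_i, i ∈ s, whose constraint
⟨x, n_i⟩ = 0 is active at x. -/
def dirConeOn {E : Type*} [NormedAddCommGroup E] [InnerProductSpace ℝ E]
    {ι : Type*} [Fintype ι] [DecidableEq ι] (s : Finset ι) (n d : ι → E)
    (x : E) : Set E :=
  {γ | ‖γ‖ = 1 ∧ ∃ α : ι → ℝ, (∀ i, 0 ≤ α i) ∧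
    (∀ i, α i ≠ 0 → i ∈ s ∧ (inner ℝ x (n i) : ℝ) = 0) ∧ γ = ∑ i ∈ s, α i • d i}

/-- (φ, η) solves the Skorokhod Problem on [0,1] for ψ with respect to the
domain G and the direction cones dc (Definition 1 of the paper). -/
def IsSPSol {E : Type*} [NormedAddCommGroup E] [InnerProductSpace ℝ E]
    [CompleteSpace E] (G : Set E) (dc : E → Set E) (ψ φ η : ℝ → E) : Prop :=
  φ 0 = ψ 0 ∧
  (∀ t ∈ Icc (0:ℝ) 1, φ t = ψ t + η t) ∧
  (∀ t ∈ Icc (0:ℝ) 1, φ t ∈ G) ∧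
  eVariationOn η (Icc (0:ℝ) 1) ≠ ⊤ ∧
  ∃ γ : ℝ → E, ∃ μ : Measure ℝ,
    (∀ t ∈ Icc (0:ℝ) 1, μ (Icc 0 t) = eVariationOn η (Icc 0 t)) ∧
    μ (Icc (0:ℝ) 1)ᶜ = 0 ∧
    μ {t ∈ Icc (0:ℝ) 1 | φ t ∉ frontier G} = 0 ∧
    (∀ᵐ t ∂μ, γ t ∈ dc (φ t)) ∧
    (∀ t ∈ Icc (0:ℝ) 1, η t = ∫ s in Icc 0 t, γ s ∂μ)

/-- Existence of Skorokhod Problem solutions for all bounded-variation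
inputs starting in G. -/
def SPExists {E : Type*} [NormedAddCommGroup E] [InnerProductSpace ℝ E]
    [CompleteSpace E] (G : Set E) (dc : E → Set E) : Prop :=
  ∀ ψ : ℝ → E, eVariationOn ψ (Icc (0:ℝ) 1) ≠ ⊤ → ψ 0 ∈ G →
    ∃ φ η, IsSPSol G dc ψ φ η

/-- Lipschitz continuity (with constant K1, in sup norm) of the Skorokhod
Map on paths of bounded variation. -/
def SPLipschitz {E : Type*} [NormedAddCommGroup E] [InnerProductSpace ℝ E]
    [CompleteSpace E] (G : Set E) (dc : E → Set E) (K1 : ℝ) : Prop :=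
  ∀ ψ₁ φ₁ η₁ ψ₂ φ₂ η₂ : ℝ → E,
    eVariationOn ψ₁ (Icc (0:ℝ) 1) ≠ ⊤ → eVariationOn ψ₂ (Icc (0:ℝ) 1) ≠ ⊤ →
    IsSPSol G dc ψ₁ φ₁ η₁ → IsSPSol G dc ψ₂ φ₂ η₂ →
    ∀ t ∈ Icc (0:ℝ) 1, ‖φ₁ t - φ₂ t‖ ≤ K1 * ⨆ s ∈ Icc (0:ℝ) 1, ‖ψ₁ s - ψ₂ s‖

theorem eVariationOn_add_const {α E : Type*} [LinearOrder α] [SeminormedAddCommGroup E]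
    (f : α → E) (c : E) (s : Set α) :
    eVariationOn (fun t => f t + c) s = eVariationOn f s := by
  simp only [eVariationOn, edist_add_right]

theorem BoundedVariationOn.norm_le {α E : Type*} [LinearOrder α] [SeminormedAddCommGroup E]
    {f : α → E} {s : Set α} (hf : BoundedVariationOn f s) {a t : α} (ha : a ∈ s) (ht : t ∈ s) :
    ‖f t‖ ≤ ‖f a‖ + (eVariationOn f s).toReal := by
  calc ‖f t‖ ≤ ‖f a‖ + ‖f t - f a‖ := norm_le_norm_add_norm_sub' _ _
    _ ≤ _ := by grw [← dist_eq_norm, hf.dist_le ht ha]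

@[simp]
theorem eVariationOn_const {α E : Type*} [LinearOrder α] [PseudoEMetricSpace E]
    (c : E) (s : Set α) : eVariationOn (fun _ : α => c) s = 0 :=
  (eVariationOn.eq_zero_iff _).2 fun _ _ _ _ => edist_self _

section SkorokhodProblem

variable {E : Type*} [NormedAddCommGroup E] [InnerProductSpace ℝ E] [CompleteSpace E]
  {G : Set E} {dc : E → Set E} {ψ φ η : ℝ → E}

theorem isSPSol_const {y : E} (hy : y ∈ G) :
    IsSPSol G dc (fun _ => y) (fun _ => y) (fun _ => 0) :=
  ⟨rfl, fun _ _ => by simp, fun _ _ => hy, by simp, 0, 0,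
    fun _ _ => by simp, by simp, by simp, by simp, fun _ _ => by simp⟩

theorem IsSPSol.exists_norm_le (hψ : BoundedVariationOn ψ (Icc 0 1)) (h : IsSPSol G dc ψ φ η) :
    ∃ M, ∀ t ∈ Icc (0:ℝ) 1, ‖φ t‖ ≤ M := by
  obtain ⟨-, hφ, -, hη, -⟩ := h
  have h0 : (0:ℝ) ∈ Icc (0:ℝ) 1 := ⟨le_rfl, zero_le_one⟩
  refine ⟨‖ψ 0‖ + (eVariationOn ψ (Icc 0 1)).toReal +
    (‖η 0‖ + (eVariationOn η (Icc 0 1)).toReal), fun t ht => ?_⟩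
  rw [hφ t ht]
  exact (norm_add_le _ _).trans <| add_le_add (hψ.norm_le h0 ht) (BoundedVariationOn.norm_le hη h0 ht)

theorem IsSPSol.add_const (v : E) (hG : ∀ y, y + v ∈ G ↔ y ∈ G) (hdc : ∀ y, dc (y + v) = dc y)
    (h : IsSPSol G dc ψ φ η) : IsSPSol G dc (fun t => ψ t + v) (fun t => φ t + v) η := by
  obtain ⟨h0, hφ, hφG, hη, γ, μ, hμ, hμc, hfr, hγ, hηγ⟩ := h
  have hfrontier : ∀ y, y + v ∈ frontier G ↔ y ∈ frontier G := by
    have := (Homeomorph.addRight v).preimage_frontier G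
    rw [show (Homeomorph.addRight v) ⁻¹' G = G from Set.ext hG] at this
    exact fun y => Set.ext_iff.mp this y
  refine ⟨by simp [h0], fun t ht => by simp [hφ t ht, add_right_comm],
    fun t ht => (hG _).2 (hφG t ht), hη, γ, μ, hμ, hμc, by simpa [hfrontier] using hfr,
    by simpa [hdc] using hγ, hηγ⟩

theorem IsSPSol.of_inter_eq {G' V : Set E} {dc' : E → Set E} (hV : IsOpen V)
    (hG : G ∩ V = G' ∩ V) (hdc : ∀ y ∈ V, dc y = dc' y) (hφV : ∀ t ∈ Icc (0:ℝ) 1, φ t ∈ V)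
    (h : IsSPSol G dc ψ φ η) : IsSPSol G' dc' ψ φ η := by
  obtain ⟨h0, hφ, hφG, hη, γ, μ, hμ, hμc, hfr, hγ, hηγ⟩ := h
  have hfrontier : frontier G ∩ V = frontier G' ∩ V := by
    rw [← frontier_inter_open_inter hV, hG, frontier_inter_open_inter hV]
  have hIcc : ∀ᵐ t ∂μ, t ∈ Icc (0:ℝ) 1 := measure_mono_null (fun _ ht => ht) hμc
  refine ⟨h0, hφ, fun t ht => (hG ▸ ⟨hφG t ht, hφV t ht⟩ : φ t ∈ G' ∩ V).1, hη, γ, μ, hμ, hμc,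
    measure_mono_null ?_ hfr, ?_, hηγ⟩
  · rintro t ⟨ht, hφt⟩
    exact ⟨ht, fun hfrt => hφt (hfrontier ▸ ⟨hfrt, hφV t ht⟩ : φ t ∈ frontier G' ∩ V).1⟩
  · filter_upwards [hγ, hIcc] with t hγt ht
    rwa [← hdc _ (hφV t ht)]

end SkorokhodProblem

open Filter

section PolyhedralDomain

variable {E : Type*} [NormedAddCommGroup E] [InnerProductSpace ℝ E] {ι : Type*} (n : ι → E)

theorem isClosed_setOf_forall_inner_nonneg :
    IsClosed {y : E | ∀ i, 0 ≤ (inner ℝ y (n i) : ℝ)} := by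
  simp only [ofPred_forall]
  exact isClosed_iInter fun i => isClosed_le continuous_const (continuous_id.inner continuous_const)

theorem isOpen_setOf_forall_notMem_inner_pos [Finite ι] (s : Finset ι) :
    IsOpen {y : E | ∀ i ∉ s, 0 < (inner ℝ y (n i) : ℝ)} := by
  simp only [ofPred_forall]
  exact isOpen_iInter_of_finite fun i => isOpen_iInter_of_finite fun _ =>
    isOpen_lt continuous_const (continuous_id.inner continuous_const)

theorem setOf_forall_inner_nonneg_inter (s : Finset ι) :
    {y : E | ∀ i, 0 ≤ (inner ℝ y (n i) : ℝ)} ∩ {y | ∀ i ∉ s, 0 < (inner ℝ y (n i) : ℝ)} =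
      {y : E | ∀ i ∈ s, 0 ≤ (inner ℝ y (n i) : ℝ)} ∩ {y | ∀ i ∉ s, 0 < (inner ℝ y (n i) : ℝ)} := by
  ext y
  refine ⟨fun h => ⟨fun i _ => h.1 i, h.2⟩, fun h => ⟨fun i => ?_, h.2⟩⟩
  by_cases hi : i ∈ s
  exacts [h.1 i hi, (h.2 i hi).le]

variable {n} {s : Finset ι} {v : E}

theorem add_mem_setOf_inner_nonneg_iff (hv : ∀ i ∈ s, (inner ℝ v (n i) : ℝ) = 0) (y : E) :
    y + v ∈ {y : E | ∀ i ∈ s, 0 ≤ (inner ℝ y (n i) : ℝ)} ↔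
      y ∈ {y : E | ∀ i ∈ s, 0 ≤ (inner ℝ y (n i) : ℝ)} := by
  simp +contextual only [mem_ofPred_eq, inner_add_left, hv, add_zero]

theorem eventually_inner_add_smul_pos [Finite ι] {x : E}
    (hx : ∀ i ∉ s, 0 < (inner ℝ x (n i) : ℝ)) (M : ℝ) :
    ∀ᶠ a : ℝ in atTop, ∀ i ∉ s, ∀ y : E, ‖y‖ ≤ M → 0 < (inner ℝ (y + a • x) (n i) : ℝ) := by
  refine eventually_all.2 fun i => ?_
  by_cases hi : i ∈ s
  · exact Eventually.of_forall fun _ h => absurd hi h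
  have hxi := hx i hi
  filter_upwards [eventually_gt_atTop (M * ‖n i‖ / inner ℝ x (n i))] with a ha _ y hy
  rw [div_lt_iff₀ hxi] at ha
  have hyn : -(M * ‖n i‖) ≤ (inner ℝ y (n i) : ℝ) :=
    (abs_le.1 ((abs_real_inner_le_norm y (n i)).trans
      (mul_le_mul_of_nonneg_right hy (norm_nonneg _)))).1
  rw [inner_add_left, real_inner_smul_left]
  linarith

variable [Fintype ι] [DecidableEq ι] (d : ι → E)

theorem dirConeOn_add_of_inner_eq_zero (hv : ∀ i ∈ s, (inner ℝ v (n i) : ℝ) = 0) (y : E) :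
    dirConeOn s n d (y + v) = dirConeOn s n d y := by
  ext γ
  refine and_congr_right fun _ => exists_congr fun α => and_congr_right fun _ =>
    and_congr_left fun _ => forall_congr' fun i => imp_congr_right fun _ =>
      and_congr_right fun hi => ?_
  rw [inner_add_left, hv i hi, add_zero]

theorem dirConeOn_univ_eq {y : E} (hy : ∀ i ∉ s, (inner ℝ y (n i) : ℝ) ≠ 0) :
    dirConeOn Finset.univ n d y = dirConeOn s n d y := by
  ext γ
  simp only [dirConeOn, mem_ofPred_eq, Finset.mem_univ, true_and]
  refine and_congr_right fun _ => exists_congr fun α => and_congr_right fun _ => ?_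
  have hsupp : (∀ i, α i ≠ 0 → (inner ℝ y (n i) : ℝ) = 0) ↔
      ∀ i, α i ≠ 0 → i ∈ s ∧ (inner ℝ y (n i) : ℝ) = 0 :=
    ⟨fun h i hi => ⟨by_contra fun his => hy i his (h i hi), h i hi⟩, fun h i hi => (h i hi).2⟩
  rw [hsupp]
  refine and_congr_right fun h => ?_
  rw [Finset.sum_subset (Finset.subset_univ s) fun i _ his => ?_]
  rw [show α i = 0 from by_contra fun hα => his (h i hα).1, zero_smul]

end PolyhedralDomain

section Localization

variable {E : Type*} [NormedAddCommGroup E] [InnerProductSpace ℝ E] [CompleteSpace E]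
  {ι : Type*} [Fintype ι] [DecidableEq ι] {n d : ι → E} {s : Finset ι} {ψ φ η : ℝ → E}

theorem IsSPSol.add_of_forall_inner_pos {v : E} (hv : ∀ i ∈ s, (inner ℝ v (n i) : ℝ) = 0)
    (h : IsSPSol {y | ∀ i ∈ s, 0 ≤ (inner ℝ y (n i) : ℝ)} (dirConeOn s n d) ψ φ η)
    (hφ : ∀ t ∈ Icc (0:ℝ) 1, ∀ i ∉ s, 0 < (inner ℝ (φ t + v) (n i) : ℝ)) :
    IsSPSol {y | ∀ i, 0 ≤ (inner ℝ y (n i) : ℝ)} (dirConeOn Finset.univ n d)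
      (fun t => ψ t + v) (fun t => φ t + v) η :=
  (h.add_const v (add_mem_setOf_inner_nonneg_iff hv)
    (dirConeOn_add_of_inner_eq_zero d hv)).of_inter_eq
    (isOpen_setOf_forall_notMem_inner_pos n s) (setOf_forall_inner_nonneg_inter n s).symm
    (fun _ hy => (dirConeOn_univ_eq d fun i hi => (hy i hi).ne').symm) hφ

theorem IsSPSol.sub_of_forall_inner_pos {v : E} (hv : ∀ i ∈ s, (inner ℝ v (n i) : ℝ) = 0)
    (h : IsSPSol {y | ∀ i, 0 ≤ (inner ℝ y (n i) : ℝ)} (dirConeOn Finset.univ n d)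
      (fun t => ψ t + v) φ η)
    (hφ : ∀ t ∈ Icc (0:ℝ) 1, ∀ i ∉ s, 0 < (inner ℝ (φ t) (n i) : ℝ)) :
    IsSPSol {y | ∀ i ∈ s, 0 ≤ (inner ℝ y (n i) : ℝ)} (dirConeOn s n d)
      ψ (fun t => φ t - v) η := by
  have hv' : ∀ i ∈ s, (inner ℝ (-v) (n i) : ℝ) = 0 := fun i hi => by
    rw [inner_neg_left, hv i hi, neg_zero]
  simpa [← sub_eq_add_neg] using
    (h.of_inter_eq (isOpen_setOf_forall_notMem_inner_pos n s)
      (setOf_forall_inner_nonneg_inter n s)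
      (fun _ hy => dirConeOn_univ_eq d fun i hi => (hy i hi).ne') hφ).add_const (-v)
      (add_mem_setOf_inner_nonneg_iff hv') (dirConeOn_add_of_inner_eq_zero d hv')

variable {x : E}

theorem spExists_localization (hxs : ∀ i ∈ s, (inner ℝ x (n i) : ℝ) = 0)
    (hx : ∀ i ∉ s, 0 < (inner ℝ x (n i) : ℝ)) {K1 : ℝ}
    (hEx : SPExists {y | ∀ i, 0 ≤ (inner ℝ y (n i) : ℝ)} (dirConeOn Finset.univ n d))
    (hLip : SPLipschitz {y | ∀ i, 0 ≤ (inner ℝ y (n i) : ℝ)} (dirConeOn Finset.univ n d) K1) :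
    SPExists {y | ∀ i ∈ s, 0 ≤ (inner ℝ y (n i) : ℝ)} (dirConeOn s n d) := by
  intro ψ hψ hψ0
  set S := ⨆ t ∈ Icc (0:ℝ) 1, ‖ψ t - ψ 0‖
  obtain ⟨a, ha₀, ha⟩ := ((eventually_inner_add_smul_pos hx ‖ψ 0‖).and
    (eventually_inner_add_smul_pos hx (‖ψ 0‖ + K1 * S))).exists
  have hax : ∀ i ∈ s, (inner ℝ (a • x) (n i) : ℝ) = 0 := fun i hi => by
    rw [real_inner_smul_left, hxs i hi, mul_zero]
  have hψa : ψ 0 + a • x ∈ {y | ∀ i, 0 ≤ (inner ℝ y (n i) : ℝ)} := by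
    have h : ψ 0 + a • x ∈ {y | ∀ i ∈ s, 0 ≤ (inner ℝ y (n i) : ℝ)} ∩
        {y | ∀ i ∉ s, 0 < (inner ℝ y (n i) : ℝ)} :=
      ⟨(add_mem_setOf_inner_nonneg_iff hax _).2 hψ0, fun i hi => ha₀ i hi _ le_rfl⟩
    rw [← setOf_forall_inner_nonneg_inter] at h
    exact h.1
  have hψaBV : BoundedVariationOn (fun t => ψ t + a • x) (Icc 0 1) := by
    rwa [BoundedVariationOn, eVariationOn_add_const]
  obtain ⟨φ, η, hsol⟩ := hEx _ hψaBV hψa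
  have hclose : ∀ t ∈ Icc (0:ℝ) 1, ‖φ t - (ψ 0 + a • x)‖ ≤ K1 * S := by
    simpa only [add_sub_add_right_eq_sub] using
      hLip _ _ _ _ _ _ hψaBV (by simp) hsol (isSPSol_const hψa)
  refine ⟨_, η, hsol.sub_of_forall_inner_pos hax fun t ht i hi => ?_⟩
  have hy : ‖φ t - a • x‖ ≤ ‖ψ 0‖ + K1 * S := calc
    ‖φ t - a • x‖ ≤ ‖ψ 0‖ + ‖φ t - a • x - ψ 0‖ := norm_le_norm_add_norm_sub' _ _
    _ ≤ ‖ψ 0‖ + K1 * S := by rw [sub_sub, add_comm (a • x)]; grw [hclose t ht]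
  simpa using ha i hi _ hy

theorem spLipschitz_localization (hxs : ∀ i ∈ s, (inner ℝ x (n i) : ℝ) = 0)
    (hx : ∀ i ∉ s, 0 < (inner ℝ x (n i) : ℝ)) {K1 : ℝ}
    (hLip : SPLipschitz {y | ∀ i, 0 ≤ (inner ℝ y (n i) : ℝ)} (dirConeOn Finset.univ n d) K1) :
    SPLipschitz {y | ∀ i ∈ s, 0 ≤ (inner ℝ y (n i) : ℝ)} (dirConeOn s n d) K1 := by
  intro ψ₁ φ₁ η₁ ψ₂ φ₂ η₂ hψ₁ hψ₂ h₁ h₂ t ht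
  obtain ⟨M₁, hM₁⟩ := h₁.exists_norm_le hψ₁
  obtain ⟨M₂, hM₂⟩ := h₂.exists_norm_le hψ₂
  obtain ⟨a, ha₁, ha₂⟩ := ((eventually_inner_add_smul_pos hx M₁).and
    (eventually_inner_add_smul_pos hx M₂)).exists
  have hax : ∀ i ∈ s, (inner ℝ (a • x) (n i) : ℝ) = 0 := fun i hi => by
    rw [real_inner_smul_left, hxs i hi, mul_zero]
  simpa using hLip _ _ _ _ _ _ (by rwa [eVariationOn_add_const])
    (by rwa [eVariationOn_add_const])
    (h₁.add_of_forall_inner_pos hax fun t ht i hi => ha₁ i hi _ (hM₁ t ht))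
    (h₂.add_of_forall_inner_pos hax fun t ht i hi => ha₂ i hi _ (hM₂ t ht)) t ht

end Localization

theorem skorokhod_localization_general {N q : ℕ}
    (n d : Fin q → EuclideanSpace ℝ (Fin N))
    (K1 : ℝ)
    (x : EuclideanSpace ℝ (Fin N))
    (hxG : x ∈ frontier {y : EuclideanSpace ℝ (Fin N) | ∀ i, 0 ≤ (inner ℝ y (n i) : ℝ)})
    (Ix : Finset (Fin q)) (hIx : ∀ i, i ∈ Ix ↔ (inner ℝ (n i) x : ℝ) = 0)
    (hEx : SPExists {y : EuclideanSpace ℝ (Fin N) | ∀ i, 0 ≤ (inner ℝ y (n i) : ℝ)}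
        (dirConeOn Finset.univ n d))
    (hLip : SPLipschitz {y : EuclideanSpace ℝ (Fin N) | ∀ i, 0 ≤ (inner ℝ y (n i) : ℝ)}
        (dirConeOn Finset.univ n d) K1) :
    SPExists {y : EuclideanSpace ℝ (Fin N) | ∀ i ∈ Ix, 0 ≤ (inner ℝ y (n i) : ℝ)}
        (dirConeOn Ix n d) ∧
    SPLipschitz {y : EuclideanSpace ℝ (Fin N) | ∀ i ∈ Ix, 0 ≤ (inner ℝ y (n i) : ℝ)}
        (dirConeOn Ix n d) K1 := by
  have hxs : ∀ i ∈ Ix, (inner ℝ x (n i) : ℝ) = 0 := fun i hi => by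
    rw [real_inner_comm]; exact (hIx i).1 hi
  have hxmem : x ∈ {y : EuclideanSpace ℝ (Fin N) | ∀ i, 0 ≤ (inner ℝ y (n i) : ℝ)} :=
    (isClosed_setOf_forall_inner_nonneg n).frontier_subset hxG
  have hx : ∀ i ∉ Ix, 0 < (inner ℝ x (n i) : ℝ) := fun i hi =>
    (hxmem i).lt_of_ne' fun h => hi ((hIx i).2 (by rwa [real_inner_comm]))
  exact ⟨spExists_localization hxs hx hEx hLip, spLipschitz_localization hxs hx hLip⟩

/-- Lemma 2: localization of regularity.  If the Skorokhod
Map for G = ∩_{i=1}^q {⟨·, n_i⟩ ≥ 0} with data {(n_i, d_i)} exists on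
bounded-variation paths and is Lipschitz with constant K1, and x ∈ ∂G,
x ≠ 0, with active set I(x) = {i : ⟨n_i, x⟩ = 0}, then the Skorokhod Map for
G̃ = ∩_{i ∈ I(x)} {⟨·, n_i⟩ ≥ 0} with data {(n_i, d_i), i ∈ I(x)} also
exists on bounded-variation paths and is Lipschitz with the same constant K1. -/
theorem skorokhod_localization {N q : ℕ}
    (n d : Fin q → EuclideanSpace ℝ (Fin N))
    (hnd : ∀ i, 0 < (inner ℝ (n i) (d i) : ℝ))
    (K1 : ℝ)
    (x : EuclideanSpace ℝ (Fin N)) (hx0 : x ≠ 0)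
    (hxG : x ∈ frontier {y : EuclideanSpace ℝ (Fin N) | ∀ i, 0 ≤ (inner ℝ y (n i) : ℝ)})
    (Ix : Finset (Fin q)) (hIx : ∀ i, i ∈ Ix ↔ (inner ℝ (n i) x : ℝ) = 0)
    (hEx : SPExists {y : EuclideanSpace ℝ (Fin N) | ∀ i, 0 ≤ (inner ℝ y (n i) : ℝ)}
        (dirConeOn Finset.univ n d))
    (hLip : SPLipschitz {y : EuclideanSpace ℝ (Fin N) | ∀ i, 0 ≤ (inner ℝ y (n i) : ℝ)}
        (dirConeOn Finset.univ n d) K1) :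
    SPExists {y : EuclideanSpace ℝ (Fin N) | ∀ i ∈ Ix, 0 ≤ (inner ℝ y (n i) : ℝ)}
        (dirConeOn Ix n d) ∧
    SPLipschitz {y : EuclideanSpace ℝ (Fin N) | ∀ i ∈ Ix, 0 ≤ (inner ℝ y (n i) : ℝ)}
        (dirConeOn Ix n d) K1 :=
  skorokhod_localization_general n d K1 x hxG Ix hIx hEx hLip

end
end

section
/- Consider the Jackson network. For any facet index I ⊆ {1,…,N}, the perturbation vector Σ_v c_v (r_{I,v} − r_{∅,v}) v equals Σ_{i ∈ I} d_i, where d_i = −Σ_{j≠i} c_{i,j} σ_i p_{i,j}(e_j − e_i) + c_i^− σ_i p_{i,0} e_i. -/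
open Finset

/-- for the Jackson network and any facet index I ⊆ {1,…,N},
the perturbation vector Σ_v c_v (r_{I,v} − r_{∅,v}) v equals Σ_{i∈I} d_i,
where d_i = −Σ_{j≠i} c_{i,j} σ_i p_{i,j}(e_j − e_i) + c_i^− σ_i p_{i,0} e_i.
The sum over v is grouped over v = e_i, v = −e_i and v = e_j − e_i, with
r_{I,e_i} = a_i, r_{I,−e_i} = σ_i p_{i,0} 1{i∉I}, r_{I,e_j−e_i} = σ_i p_{i,j} 1{i∉I}. -/
theorem jackson_perturbation_sum {N : ℕ}
    (a σ cp cm : Fin N → ℝ) (c p : Fin N → Fin N → ℝ) (p0 : Fin N → ℝ)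
    (hσ : ∀ i, 0 < σ i) (hcm : ∀ i, 0 < cm i) (hcp : ∀ i, 0 < cp i)
    (hc : ∀ i j, 0 < c i j) (ha : ∀ i, 0 ≤ a i)
    (hp : ∀ i j, 0 ≤ p i j) (hp0 : ∀ i, 0 ≤ p0 i)
    (I : Finset (Fin N)) :
    ∀ k, ((∑ i, cp i * (a i - a i) * (if k = i then (1:ℝ) else 0))
      + (∑ i, cm i * ((if i ∈ I then 0 else σ i * p0 i) - σ i * p0 i) *
          (-(if k = i then (1:ℝ) else 0)))
      + ∑ i, ∑ j ∈ Finset.univ.erase i,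
          c i j * ((if i ∈ I then 0 else σ i * p i j) - σ i * p i j) *
            ((if k = j then (1:ℝ) else 0) - (if k = i then (1:ℝ) else 0)))
      = ∑ i ∈ I, (if k = i
          then cm i * σ i * p0 i + ∑ j ∈ Finset.univ.erase i, c i j * σ i * p i j
          else -(c i k * σ i * p i k)) := by
  intro k
  classical
  have e1 : (∑ i, cp i * (a i - a i) * (if k = i then (1:ℝ) else 0)) = 0 := by
    simp
  have e2 : (∑ i, cm i * ((if i ∈ I then 0 else σ i * p0 i) - σ i * p0 i) *
      (-(if k = i then (1:ℝ) else 0)))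
      = ∑ i ∈ I, (if k = i then cm i * σ i * p0 i else 0) := by
    rw [show (∑ i ∈ I, (if k = i then cm i * σ i * p0 i else 0))
        = ∑ i ∈ Finset.univ ∩ I, (if k = i then cm i * σ i * p0 i else 0) by
        rw [Finset.univ_inter],
      ← Finset.sum_ite_mem]
    apply Finset.sum_congr rfl
    intro i _
    by_cases hi : i ∈ I <;> by_cases hk : k = i <;> simp [hi, hk] <;> ring
  have e3 : (∑ i, ∑ j ∈ Finset.univ.erase i,
        c i j * ((if i ∈ I then 0 else σ i * p i j) - σ i * p i j) *
          ((if k = j then (1:ℝ) else 0) - (if k = i then (1:ℝ) else 0)))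
      = ∑ i ∈ I, (if k = i
          then ∑ j ∈ Finset.univ.erase i, c i j * σ i * p i j
          else -(c i k * σ i * p i k)) := by
    rw [show (∑ i ∈ I, (if k = i
          then ∑ j ∈ Finset.univ.erase i, c i j * σ i * p i j
          else -(c i k * σ i * p i k)))
        = ∑ i ∈ Finset.univ ∩ I, (if k = i
          then ∑ j ∈ Finset.univ.erase i, c i j * σ i * p i j
          else -(c i k * σ i * p i k)) by rw [Finset.univ_inter],
      ← Finset.sum_ite_mem]
    apply Finset.sum_congr rfl
    intro i _
    by_cases hi : i ∈ I
    · simp only [hi, if_true]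
      by_cases hk : k = i
      · subst hk
        simp only [if_pos rfl]
        apply Finset.sum_congr rfl
        intro j hj
        have : k ≠ j := fun h => (Finset.mem_erase.mp hj).1 h.symm
        simp [this]
        ring
      · simp only [if_neg hk]
        have hkmem : k ∈ Finset.univ.erase i := Finset.mem_erase.mpr ⟨hk, Finset.mem_univ k⟩
        rw [← Finset.sum_erase_add _ _ hkmem,
          Finset.sum_eq_zero (fun j hj => by
            have h1 : k ≠ j := fun h => (Finset.mem_erase.mp hj).1 h.symm
            simp [h1]), zero_add]
        simp
        ring
    · simp only [hi, if_false]
      apply Finset.sum_eq_zero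
      intro j _
      simp
  rw [e1, e2, e3, zero_add, ← Finset.sum_add_distrib]
  apply Finset.sum_congr rfl
  intro i _
  by_cases hk : k = i <;> simp [hk]
end

section
/- For the Jackson network state space ℤ_+^N with the intensities r(x,v) = r_{∅,v}·1{x + v ∈ ℤ_+^N}, any two points x, y ∈ ℤ_+^N can be connected by a sequence x = x_0, x_1, …, x_J = y in ℤ_+^N with r(x_{k−1}, x_k − x_{k−1}) > 0 for each k and with length J ≤ (N+1)·‖x − y‖_1, assuming the routing matrix [p_{i,j}] is irreducible, a_j > 0 for some j, and p_{k,0} > 0 for some k. -/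
open Finset

/-- A single jump of the Jackson network with intensities
r(x,v) = r_{∅,v}·1{x+v ∈ ℤ₊^N}: an arrival +e_i (when a_i > 0), a departure
−e_i (when p_{i,0} > 0), or a routing e_j − e_i (when p_{i,j} > 0, i ≠ j);
both endpoints must lie in ℤ₊^N. -/
def JacksonStep {N : ℕ} (a : Fin N → ℝ) (p : Fin N → Fin N → ℝ)
    (p0 : Fin N → ℝ) (x y : Fin N → ℤ) : Prop :=
  (∀ i, 0 ≤ x i) ∧ (∀ i, 0 ≤ y i) ∧
  ((∃ i, 0 < a i ∧ y = x + Pi.single i 1) ∨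
   (∃ i, 0 < p0 i ∧ y = x - Pi.single i 1) ∨
   (∃ i j, i ≠ j ∧ 0 < p i j ∧ y = x - Pi.single i 1 + Pi.single j 1))

namespace JacksonAux

/-- A path of `n` edges for a relation, given by a ℕ-indexed function. -/
def RPath {α : Type*} (r : α → α → Prop) (n : ℕ) (i j : α) : Prop :=
  ∃ f : ℕ → α, f 0 = i ∧ f n = j ∧ ∀ k < n, r (f k) (f (k + 1))

/-- A path whose consecutive vertices are distinct. -/
def GoodPath {α : Type*} (r : α → α → Prop) (n : ℕ) (i j : α) : Prop :=
  ∃ f : ℕ → α, f 0 = i ∧ f n = j ∧ (∀ k < n, r (f k) (f (k + 1))) ∧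
    (∀ k < n, f k ≠ f (k + 1))

lemma transGen_rpath {α : Type*} {r : α → α → Prop} {i j : α}
    (h : Relation.TransGen r i j) : ∃ n, RPath r n i j := by
  induction h with
  | single hr =>
    rename_i b
    exact ⟨1, fun k => if k = 0 then i else b, by simp, by simp,
      fun k hk => by
        interval_cases k
        simpa using hr⟩
  | tail hab hr ih =>
    rename_i b c
    obtain ⟨n, f, hf0, hfn, hfs⟩ := ih
    refine ⟨n + 1, fun k => if k ≤ n then f k else c, by simp [hf0], by simp, ?_⟩
    intro k hk
    by_cases h1 : k + 1 ≤ n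
    · simp only [show k ≤ n by omega, h1, if_true]
      exact hfs k (by omega)
    · have hkn : k = n := by omega
      subst hkn
      simp only [le_refl, if_true, show ¬ (k + 1 ≤ k) by omega, if_false]
      rw [hfn]; exact hr

lemma rpath_splice {α : Type*} {r : α → α → Prop} (f : ℕ → α) (n k l : ℕ)
    (hkl : k < l) (hln : l ≤ n) (heq : f k = f l)
    (hstep : ∀ m < n, r (f m) (f (m + 1))) :
    ∃ g : ℕ → α, g 0 = f 0 ∧ g (n - (l - k)) = f n ∧
      ∀ m < n - (l - k), r (g m) (g (m + 1)) := by
  refine ⟨fun m => if m < k then f m else f (m + (l - k)), ?_, ?_, ?_⟩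
  · by_cases h0 : 0 < k
    · simp [h0]
    · have hk0 : k = 0 := by omega
      subst hk0
      simp only [lt_irrefl, if_false, Nat.zero_add, Nat.sub_zero]
      exact heq.symm
  · have h1 : ¬ (n - (l - k) < k) := by omega
    simp only [h1, if_false]
    congr 1
    omega
  · intro m hm
    by_cases h1 : m < k
    · simp only [h1, if_true]
      by_cases h2 : m + 1 < k
      · simp only [h2, if_true]
        exact hstep m (by omega)
      · have h3 : m + 1 = k := by omega
        simp only [h2, if_false]
        have h4 : m + 1 + (l - k) = l := by omega
        rw [h4, ← heq, ← h3]
        exact hstep m (by omega)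
    · simp only [h1, if_false, show ¬ (m + 1 < k) by omega, if_false]
      have h4 : m + 1 + (l - k) = (m + (l - k)) + 1 := by omega
      rw [h4]
      exact hstep (m + (l - k)) (by omega)

lemma rpath_shorten {α : Type*} [Fintype α] (r : α → α → Prop) :
    ∀ n (i j : α), RPath r n i j → ∃ m ≤ Fintype.card α, GoodPath r m i j := by
  intro n
  induction n using Nat.strong_induction_on with
  | _ n ih =>
    intro i j hpath
    obtain ⟨f, hf0, hfn, hfs⟩ := hpath
    by_cases hdup : ∃ k l, k < l ∧ l ≤ n ∧ f k = f l
    · obtain ⟨k, l, hkl, hln, heq⟩ := hdup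
      obtain ⟨g, hg0, hgn, hgs⟩ := rpath_splice f n k l hkl hln heq hfs
      have hlt : n - (l - k) < n := by omega
      exact ih (n - (l - k)) hlt i j ⟨g, hg0.trans hf0, hgn.trans hfn, hgs⟩
    · push_neg at hdup
      have hinj : Function.Injective (fun m : Fin (n + 1) => f m.val) := by
        intro m1 m2 h
        by_contra hne
        rcases lt_or_gt_of_ne (fun h' : m1 = m2 => hne h') with h1 | h1
        · exact hdup m1.val m2.val h1 (by omega) h
        · exact hdup m2.val m1.val h1 (by omega) h.symm
      have hcard : n + 1 ≤ Fintype.card α := by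
        simpa using Fintype.card_le_of_injective _ hinj
      refine ⟨n, by omega, f, hf0, hfn, hfs, ?_⟩
      intro k hk hfeq
      exact hdup k (k + 1) (by omega) (by omega) hfeq

variable {N : ℕ} {a : Fin N → ℝ} {p : Fin N → Fin N → ℝ} {p0 : Fin N → ℝ}

/-- `x` can reach `y` in exactly `J` Jackson steps. -/
def Reaches (a : Fin N → ℝ) (p : Fin N → Fin N → ℝ) (p0 : Fin N → ℝ)
    (J : ℕ) (x y : Fin N → ℤ) : Prop :=
  ∃ g : ℕ → Fin N → ℤ, g 0 = x ∧ g J = y ∧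
    ∀ k < J, JacksonStep a p p0 (g k) (g (k + 1))

lemma Reaches.refl (x : Fin N → ℤ) : Reaches a p p0 0 x x :=
  ⟨fun _ => x, rfl, rfl, fun k hk => absurd hk (by omega)⟩

lemma Reaches.trans {J1 J2 : ℕ} {x z y : Fin N → ℤ}
    (h1 : Reaches a p p0 J1 x z) (h2 : Reaches a p p0 J2 z y) :
    Reaches a p p0 (J1 + J2) x y := by
  obtain ⟨g1, hg10, hg1J, hg1s⟩ := h1
  obtain ⟨g2, hg20, hg2J, hg2s⟩ := h2
  refine ⟨fun m => if m ≤ J1 then g1 m else g2 (m - J1), by simp [hg10], ?_, ?_⟩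
  · by_cases h : J1 + J2 ≤ J1
    · have hJ2 : J2 = 0 := by omega
      subst hJ2
      simp only [Nat.add_zero, le_refl, if_true, hg1J, ← hg20]
      exact hg2J
    · simp only [h, if_false]
      have : J1 + J2 - J1 = J2 := by omega
      rw [this, hg2J]
  · intro k hk
    by_cases h1 : k + 1 ≤ J1
    · simp only [show k ≤ J1 by omega, h1, if_true]
      exact hg1s k (by omega)
    · simp only [show ¬ (k + 1 ≤ J1) by omega, if_false]
      by_cases h2 : k ≤ J1
      · have hkJ : k = J1 := by omega
        subst hkJ
        simp only [le_refl, if_true]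
        have h3 : k + 1 - k = 1 := by omega
        rw [h3, hg1J, ← hg20]
        exact hg2s 0 (by omega)
      · simp only [h2, if_false]
        have h3 : k + 1 - J1 = (k - J1) + 1 := by omega
        rw [h3]
        exact hg2s (k - J1) (by omega)

lemma Reaches.single {x z : Fin N → ℤ} (h : JacksonStep a p p0 x z) :
    Reaches a p p0 1 x z := by
  refine ⟨fun k => if k = 0 then x else z, by simp, by simp, ?_⟩
  intro k hk
  interval_cases k
  simpa using h

lemma nonneg_move (x : Fin N → ℤ) (hx : ∀ t, 0 ≤ x t) (i j : Fin N)
    (hxi : 1 ≤ x i) (t : Fin N) :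
    0 ≤ ((x - Pi.single i 1 + Pi.single j 1 : Fin N → ℤ)) t := by
  have h1 := hx t
  simp only [Pi.add_apply, Pi.sub_apply, Pi.single_apply]
  by_cases h2 : t = i <;> by_cases h3 : t = j <;>
    simp only [h2, h3, if_true, if_false] <;> subst_vars <;> omega

lemma nonneg_sub (x : Fin N → ℤ) (hx : ∀ t, 0 ≤ x t) (i : Fin N)
    (hxi : 1 ≤ x i) (t : Fin N) : 0 ≤ ((x - Pi.single i 1 : Fin N → ℤ)) t := by
  have h1 := hx t
  simp only [Pi.sub_apply, Pi.single_apply]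
  by_cases h2 : t = i <;> simp only [h2, if_true, if_false] <;> subst_vars <;> omega

lemma nonneg_add (x : Fin N → ℤ) (hx : ∀ t, 0 ≤ x t) (i : Fin N)
    (t : Fin N) : 0 ≤ ((x + Pi.single i 1 : Fin N → ℤ)) t := by
  have h1 := hx t
  simp only [Pi.add_apply, Pi.single_apply]
  by_cases h2 : t = i <;> simp only [h2, if_true, if_false] <;> subst_vars <;> omega

/-- Lifting a routing path in the network graph to a path of Jackson steps
that moves one token from `i` to `f m`. -/
lemma route (x : Fin N → ℤ) (hx : ∀ t, 0 ≤ x t) (i : Fin N) (hxi : 1 ≤ x i)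
    (m : ℕ) (f : ℕ → Fin N) (hf0 : f 0 = i)
    (hstep : ∀ k < m, 0 < p (f k) (f (k + 1)))
    (hne : ∀ k < m, f k ≠ f (k + 1)) :
    Reaches a p p0 m x (x - Pi.single i 1 + Pi.single (f m) 1) := by
  refine ⟨fun k => x - Pi.single i 1 + Pi.single (f k) 1, ?_, rfl, ?_⟩
  · show x - Pi.single i 1 + Pi.single (f 0) 1 = x
    rw [hf0]; abel
  · intro k hk
    refine ⟨nonneg_move x hx i (f k) hxi, nonneg_move x hx i (f (k + 1)) hxi,
      Or.inr (Or.inr ⟨f k, f (k + 1), hne k hk, hstep k hk, ?_⟩)⟩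
    show x - Pi.single i 1 + Pi.single (f (k + 1)) 1
        = x - Pi.single i 1 + Pi.single (f k) 1 - Pi.single (f k) 1
          + Pi.single (f (k + 1)) 1
    abel

lemma remove_one (hirr : ∀ i j : Fin N, Relation.TransGen (fun i j => 0 < p i j) i j)
    (hpk : ∃ k, 0 < p0 k) (x : Fin N → ℤ) (hx : ∀ t, 0 ≤ x t) (i : Fin N)
    (hxi : 1 ≤ x i) :
    ∃ n ≤ N + 1, Reaches a p p0 n x (x - Pi.single i 1) := by
  obtain ⟨k0, hk0⟩ := hpk
  obtain ⟨n0, hn0⟩ := transGen_rpath (hirr i k0)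
  obtain ⟨m, hm, f, hf0, hfm, hstep, hne⟩ := rpath_shorten _ n0 i k0 hn0
  rw [Fintype.card_fin] at hm
  have h1 : Reaches a p p0 m x (x - Pi.single i 1 + Pi.single k0 1) := by
    have := route (a := a) (p0 := p0) x hx i hxi m f hf0 hstep hne
    rwa [hfm] at this
  have h2 : Reaches a p p0 1 (x - Pi.single i 1 + Pi.single k0 1)
      (x - Pi.single i 1) := by
    refine Reaches.single ⟨nonneg_move x hx i k0 hxi, nonneg_sub x hx i hxi,
      Or.inr (Or.inl ⟨k0, hk0, by abel⟩)⟩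
  exact ⟨m + 1, by omega, h1.trans h2⟩

lemma add_one (hirr : ∀ i j : Fin N, Relation.TransGen (fun i j => 0 < p i j) i j)
    (haj : ∃ j, 0 < a j) (x : Fin N → ℤ) (hx : ∀ t, 0 ≤ x t) (i : Fin N) :
    ∃ n ≤ N + 1, Reaches a p p0 n x (x + Pi.single i 1) := by
  obtain ⟨j0, hj0⟩ := haj
  obtain ⟨n0, hn0⟩ := transGen_rpath (hirr j0 i)
  obtain ⟨m, hm, f, hf0, hfm, hstep, hne⟩ := rpath_shorten _ n0 j0 i hn0
  rw [Fintype.card_fin] at hm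
  have h1 : Reaches a p p0 1 x (x + Pi.single j0 1) :=
    Reaches.single ⟨hx, nonneg_add x hx j0, Or.inl ⟨j0, hj0, rfl⟩⟩
  have hx' : ∀ t, 0 ≤ ((x + Pi.single j0 1 : Fin N → ℤ)) t := nonneg_add x hx j0
  have hxj0 : 1 ≤ ((x + Pi.single j0 1 : Fin N → ℤ)) j0 := by
    have := hx j0
    simp only [Pi.add_apply, Pi.single_eq_same]
    omega
  have h2 : Reaches a p p0 m (x + Pi.single j0 1) (x + Pi.single i 1) := by
    have := route (a := a) (p0 := p0) (x + Pi.single j0 1) hx' j0 hxj0 m f hf0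
      hstep hne
    rw [hfm] at this
    have heq : x + Pi.single j0 1 - Pi.single j0 1 + Pi.single i 1
        = x + Pi.single i 1 := by abel
    rwa [heq] at this
  exact ⟨1 + m, by omega, h1.trans h2⟩

lemma abs_ite (z : ℤ) : |z| = if 0 ≤ z then z else -z := by
  split
  · exact abs_of_nonneg ‹_›
  · exact abs_of_neg (by omega)

lemma main_aux (ha : ∀ i, 0 ≤ a i) (hp : ∀ i j, 0 ≤ p i j) (hp0 : ∀ i, 0 ≤ p0 i)
    (hirr : ∀ i j : Fin N, Relation.TransGen (fun i j => 0 < p i j) i j)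
    (haj : ∃ j, 0 < a j) (hpk : ∃ k, 0 < p0 k) :
    ∀ S : ℕ, ∀ x y : Fin N → ℤ, (∀ i, 0 ≤ x i) → (∀ i, 0 ≤ y i) →
      (∑ i, |x i - y i|) = (S : ℤ) →
      ∃ J ≤ (N + 1) * S, Reaches a p p0 J x y := by
  intro S
  induction S with
  | zero =>
    intro x y hx hy hsum
    have hxy : x = y := by
      funext i
      have h := (Finset.sum_eq_zero_iff_of_nonneg
        (fun i _ => abs_nonneg (x i - y i))).mp (by exact_mod_cast hsum) i
        (mem_univ i)
      have := abs_eq_zero.mp h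
      omega
    exact ⟨0, le_refl _, hxy ▸ Reaches.refl x⟩
  | succ S ih =>
    intro x y hx hy hsum
    have hne : ∃ i, x i ≠ y i := by
      by_contra h
      push_neg at h
      have : ∀ i, x i - y i = 0 := fun i => by rw [h i]; ring
      simp only [this, abs_zero, Finset.sum_const_zero] at hsum
      omega
    obtain ⟨i, hi⟩ := hne
    have hmulbound : (N + 1) * (S + 1) = (N + 1) * S + (N + 1) := by ring
    rcases lt_or_gt_of_ne hi with hlt | hgt
    · -- x i < y i : add a token at i
      set x' := x + Pi.single i 1 with hx'def
      have hx' : ∀ t, 0 ≤ x' t := nonneg_add x hx i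
      have hkey : ∀ t, |x t - y t| = |x' t - y t| + (if t = i then 1 else 0) := by
        intro t
        have hxt : x' t = x t + (if t = i then 1 else 0) := by
          simp [hx'def, Pi.single_apply]
        by_cases ht : t = i
        · subst ht
          rw [hxt]
          simp only [if_true]
          rw [abs_of_neg (by omega), abs_of_nonpos (by omega)]
          ring
        · rw [hxt]
          simp [ht]
      have hsum' : (∑ t, |x' t - y t|) = (S : ℤ) := by
        have h1 : (∑ t, |x t - y t|)
            = (∑ t, |x' t - y t|) + (∑ t : Fin N, if t = i then (1 : ℤ) else 0) := by
          rw [← Finset.sum_add_distrib]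
          exact Finset.sum_congr rfl fun t _ => hkey t
        have h2 : (∑ t : Fin N, if t = i then (1 : ℤ) else 0) = 1 := by
          simp
        rw [h1, h2] at hsum
        push_cast at hsum ⊢
        linarith
      obtain ⟨J', hJ', hR⟩ := ih x' y hx' hy hsum'
      obtain ⟨n, hn, hRn⟩ := add_one (a := a) (p0 := p0) hirr haj x hx i
      exact ⟨n + J', by omega, hRn.trans hR⟩
    · -- x i > y i : remove a token at i
      have hxi : 1 ≤ x i := by have := hy i; omega
      set x' := x - Pi.single i 1 with hx'def
      have hx' : ∀ t, 0 ≤ x' t := nonneg_sub x hx i hxi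
      have hkey : ∀ t, |x t - y t| = |x' t - y t| + (if t = i then 1 else 0) := by
        intro t
        have hxt : x' t = x t - (if t = i then 1 else 0) := by
          simp [hx'def, Pi.single_apply]
        by_cases ht : t = i
        · subst ht
          rw [hxt]
          simp only [if_true]
          rw [abs_of_pos (by omega), abs_of_nonneg (by omega)]
          ring
        · rw [hxt]
          simp [ht]
      have hsum' : (∑ t, |x' t - y t|) = (S : ℤ) := by
        have h1 : (∑ t, |x t - y t|)
            = (∑ t, |x' t - y t|) + (∑ t : Fin N, if t = i then (1 : ℤ) else 0) := by
          rw [← Finset.sum_add_distrib]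
          exact Finset.sum_congr rfl fun t _ => hkey t
        have h2 : (∑ t : Fin N, if t = i then (1 : ℤ) else 0) = 1 := by
          simp
        rw [h1, h2] at hsum
        push_cast at hsum ⊢
        linarith
      obtain ⟨J', hJ', hR⟩ := ih x' y hx' hy hsum'
      obtain ⟨n, hn, hRn⟩ := remove_one (a := a) hirr hpk x hx i hxi
      exact ⟨n + J', by omega, hRn.trans hR⟩

end JacksonAux

/-- Condition 2 for the Jackson network: any two points of
ℤ₊^N can be connected by a sequence of positively-rated jumps staying in
ℤ₊^N, of length at most (N+1)·‖x − y‖₁, provided the routing matrix is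
irreducible, a_j > 0 for some j and p_{k,0} > 0 for some k. -/
theorem jackson_communication {N : ℕ}
    (a : Fin N → ℝ) (p : Fin N → Fin N → ℝ) (p0 : Fin N → ℝ)
    (ha : ∀ i, 0 ≤ a i) (hp : ∀ i j, 0 ≤ p i j) (hp0 : ∀ i, 0 ≤ p0 i)
    (hirr : ∀ i j : Fin N, Relation.TransGen (fun i j => 0 < p i j) i j)
    (haj : ∃ j, 0 < a j) (hpk : ∃ k, 0 < p0 k)
    (x y : Fin N → ℤ) (hx : ∀ i, 0 ≤ x i) (hy : ∀ i, 0 ≤ y i) :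
    ∃ (J : ℕ) (seq : Fin (J + 1) → Fin N → ℤ),
      seq 0 = x ∧ seq (Fin.last J) = y ∧
      (∀ k : Fin J, JacksonStep a p p0 (seq k.castSucc) (seq k.succ)) ∧
      (J : ℤ) ≤ (N + 1) * ∑ i, |x i - y i| := by
  have hsnn : (0 : ℤ) ≤ ∑ i, |x i - y i| :=
    Finset.sum_nonneg fun i _ => abs_nonneg _
  set S : ℕ := (∑ i, |x i - y i|).toNat with hSdef
  have hSeq : (∑ i, |x i - y i|) = (S : ℤ) := by
    rw [hSdef, Int.toNat_of_nonneg hsnn]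
  obtain ⟨J, hJ, g, hg0, hgJ, hgs⟩ :=
    JacksonAux.main_aux ha hp hp0 hirr haj hpk S x y hx hy hSeq
  refine ⟨J, fun k => g k.val, by simpa using hg0, by simpa using hgJ, ?_, ?_⟩
  · intro k
    have := hgs k.val k.isLt
    simpa using this
  · rw [hSeq]
    have : (J : ℤ) ≤ ((N + 1) * S : ℕ) := by exact_mod_cast hJ
    push_cast at this ⊢
    linarith
end
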